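/- Let A be a badly approximable s-dimensional affine subspace of ℝⁿ, parametrized as A = {(x, y₀ + Yx) : x ∈ ℝ^s} with Y an (n-s)×s real matrix and y₀ ∈ ℝ^{n-s}. Then for every ξ ∈ A there exists c > 0 such that for every positive integer q: max_j dist(q ξ_j, ℤ) ≥ c · q^{-(s+1)/(n-s)}. -/
import Mathlib


/-- The distance from a real number to the nearest integer. -/
noncomputable def distZ (x : ℝ) : ℝ := |x - round x|

lemma distZ_nonneg (a : ℝ) : 0 ≤ distZ a := abs_nonneg _

lemma distZ_lipschitz (a b : ℝ) : distZ a ≤ distZ b + |a - b| := by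
  unfold distZ
  calc |a - round a| ≤ |a - round b| := round_le a (round b)
    _ = |(b - round b) + (a - b)| := by ring_nf
    _ ≤ |b - round b| + |a - b| := abs_add_le _ _

set_option maxHeartbeats 1000000 in
/-- Lemma 5.3: if `ξ` lies on a badly approximable `s`-dimensional affine subspace
`A = {(x, y₀ + Yx)}` of `ℝⁿ` (here `n = s + m`), then there is `c > 0` such that for
every positive integer `q`, `max_j dist(q ξ_j, ℤ) ≥ c q^{-(s+1)/(n-s)}`. -/
theorem badly_approximable_subspace_lower_bound (s m : ℕ) (hm : 0 < m)
    (Y : Matrix (Fin m) (Fin s) ℝ) (y₀ : Fin m → ℝ)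
    (hbad : ∃ ε : ℝ, 0 < ε ∧ ∀ q : Fin (s + 1) → ℤ, q ≠ 0 →
      ∃ i : Fin m, ε ≤
        (((Finset.univ.sup fun j => (q j).natAbs) : ℕ) : ℝ) ^ (((s : ℝ) + 1) / m) *
          distZ ((Matrix.of fun i j => Fin.cases (y₀ i) (fun j' => Y i j') j).mulVec
            (fun j => (q j : ℝ)) i))
    (x : Fin s → ℝ) :
    ∃ c : ℝ, 0 < c ∧ ∀ q : ℕ, 0 < q →
      ∃ j : Fin (s + m),
        c * (q : ℝ) ^ (-(((s : ℝ) + 1) / m)) ≤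
          distZ ((q : ℝ) * Fin.append x (y₀ + Y.mulVec x) j) := by
  obtain ⟨ε, hε, hba⟩ := hbad
  set w : ℝ := ((s : ℝ) + 1) / m with hwdef
  have hw0 : 0 < w := by
    apply div_pos <;> positivity
  set B : ℝ := 1 + ∑ j, (|x j| + 1) with hBdef
  have hB1 : (1:ℝ) ≤ B := by
    have : (0:ℝ) ≤ ∑ j, (|x j| + 1) := Finset.sum_nonneg fun j _ => by positivity
    linarith
  have hB0 : (0:ℝ) < B := lt_of_lt_of_le one_pos hB1
  set K : ℝ := ∑ i, ∑ j, |Y i j| with hKdef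
  have hK0 : (0:ℝ) ≤ K := Finset.sum_nonneg fun i _ => Finset.sum_nonneg fun j _ => abs_nonneg _
  refine ⟨ε * B ^ (-w) / (2 * (K + 1)), by positivity, ?_⟩
  intro q hq
  set qv : Fin (s + 1) → ℤ := Fin.cases (q : ℤ) (fun j => round ((q : ℝ) * x j)) with hqvdef
  have hqv0 : qv ≠ 0 := by
    intro h
    have h0 : qv 0 = 0 := congrFun h 0
    simp only [hqvdef, Fin.cases_zero] at h0
    omega
  obtain ⟨i, hi⟩ := hba qv hqv0
  set M : ℕ := Finset.univ.sup fun j => (qv j).natAbs with hMdef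
  have hqx : (0:ℝ) < q := by exact_mod_cast hq
  -- bound M ≤ B * q
  have hMB : (M : ℝ) ≤ B * q := by
    obtain ⟨j, -, hj⟩ := Finset.exists_mem_eq_sup Finset.univ ⟨0, Finset.mem_univ 0⟩
      (fun j => (qv j).natAbs)
    rw [hMdef, hj]
    have hcast : (((qv j).natAbs : ℕ) : ℝ) = |((qv j : ℤ) : ℝ)| := by
      push_cast [Nat.cast_natAbs]
      simp
    rw [hcast]
    induction j using Fin.cases with
    | zero =>
      simp only [hqvdef, Fin.cases_zero]
      push_cast
      rw [abs_of_nonneg hqx.le]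
      nlinarith
    | succ j' =>
      simp only [hqvdef, Fin.cases_succ]
      have h1 : |((round ((q:ℝ) * x j') : ℤ) : ℝ)| ≤ |(q:ℝ) * x j'| + 1/2 := by
        have := abs_sub_round ((q:ℝ) * x j')
        calc |((round ((q:ℝ) * x j') : ℤ) : ℝ)|
            = |((q:ℝ) * x j') - (((q:ℝ) * x j') - (round ((q:ℝ) * x j') : ℤ))| := by ring_nf
          _ ≤ |(q:ℝ) * x j'| + |((q:ℝ) * x j') - (round ((q:ℝ) * x j') : ℤ)| := abs_sub _ _
          _ ≤ |(q:ℝ) * x j'| + 1/2 := by linarith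
      have h2 : |(q:ℝ) * x j'| = q * |x j'| := by
        rw [abs_mul, abs_of_nonneg hqx.le]
      have h3 : |x j'| + 1 ≤ B := by
        rw [hBdef]
        have : |x j'| + 1 ≤ ∑ k, (|x k| + 1) :=
          Finset.single_le_sum (f := fun k => |x k| + 1)
            (fun k _ => by positivity) (Finset.mem_univ j')
        linarith
      have hq1 : (1:ℝ) ≤ q := by exact_mod_cast hq
      nlinarith
  -- lower bound on D
  set D : ℝ := distZ ((Matrix.of fun i j => Fin.cases (y₀ i) (fun j' => Y i j') j).mulVec
      (fun j => (qv j : ℝ)) i) with hDdef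
  have hD0 : 0 ≤ D := distZ_nonneg _
  set δ : ℝ := ε * B ^ (-w) * (q : ℝ) ^ (-w) with hδdef
  have hδ0 : 0 < δ := by positivity
  have hδD : δ ≤ D := by
    have hM0 : (0:ℝ) ≤ (M:ℝ) := Nat.cast_nonneg _
    have hpow : (M : ℝ) ^ w ≤ (B * q) ^ w := Real.rpow_le_rpow hM0 hMB hw0.le
    have h1 : ε ≤ (B * q) ^ w * D := le_trans hi (mul_le_mul_of_nonneg_right hpow hD0)
    have hBq0 : (0:ℝ) < B * q := by positivity
    have h2 : (B * q) ^ (-w) * ε ≤ (B * q) ^ (-w) * ((B * q) ^ w * D) :=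
      mul_le_mul_of_nonneg_left h1 (Real.rpow_nonneg hBq0.le _)
    have h3 : (B * q) ^ (-w) * ((B * q) ^ w * D) = D := by
      rw [← mul_assoc, ← Real.rpow_add hBq0, neg_add_cancel, Real.rpow_zero, one_mul]
    have h4 : (B * q) ^ (-w) = B ^ (-w) * (q:ℝ) ^ (-w) :=
      Real.mul_rpow hB0.le hqx.le
    rw [h3] at h2
    calc δ = (B * q) ^ (-w) * ε := by rw [h4, hδdef]; ring
      _ ≤ D := h2
  -- threshold
  set t : ℝ := δ / (2 * (K + 1)) with htdef
  have hct : ε * B ^ (-w) / (2 * (K + 1)) * (q : ℝ) ^ (-w) = t := by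
    rw [htdef, hδdef]; ring
  by_cases hcase : ∃ j : Fin s, t ≤ distZ ((q : ℝ) * x j)
  · obtain ⟨j, hj⟩ := hcase
    refine ⟨Fin.castAdd m j, ?_⟩
    rw [Fin.append_left]
    rw [hwdef] at hct
    rw [hct]
    exact hj
  · push_neg at hcase
    refine ⟨Fin.natAdd s i, ?_⟩
    rw [Fin.append_right]
    -- compute mulVec value
    have hmul : (Matrix.of fun i j => Fin.cases (y₀ i) (fun j' => Y i j') j).mulVec
        (fun j => (qv j : ℝ)) i
        = y₀ i * q + ∑ j, Y i j * (round ((q:ℝ) * x j) : ℤ) := by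
      simp [Matrix.mulVec, dotProduct, Fin.sum_univ_succ, hqvdef]
    set a : ℝ := (q : ℝ) * (y₀ + Y.mulVec x) i with hadef
    set b : ℝ := (Matrix.of fun i j => Fin.cases (y₀ i) (fun j' => Y i j') j).mulVec
        (fun j => (qv j : ℝ)) i with hbdef
    have ha' : a = y₀ i * q + ∑ j, Y i j * ((q:ℝ) * x j) := by
      rw [hadef]
      simp only [Pi.add_apply, Matrix.mulVec, dotProduct]
      rw [mul_add, Finset.mul_sum, mul_comm ((q:ℝ)) (y₀ i)]
      congr 1
      apply Finset.sum_congr rfl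
      intro j _
      ring
    have hab : a - b = ∑ j, Y i j * ((q:ℝ) * x j - (round ((q:ℝ) * x j) : ℤ)) := by
      rw [ha', hmul, add_sub_add_left_eq_sub, ← Finset.sum_sub_distrib]
      apply Finset.sum_congr rfl
      intro j _
      ring
    have habs : |a - b| ≤ K * t := by
      rw [hab]
      calc |∑ j, Y i j * ((q:ℝ) * x j - (round ((q:ℝ) * x j) : ℤ))|
          ≤ ∑ j, |Y i j * ((q:ℝ) * x j - (round ((q:ℝ) * x j) : ℤ))| :=
            Finset.abs_sum_le_sum_abs _ _
        _ ≤ ∑ j, |Y i j| * t := by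
            apply Finset.sum_le_sum
            intro j _
            rw [abs_mul]
            have hd : |(q:ℝ) * x j - (round ((q:ℝ) * x j) : ℤ)| = distZ ((q:ℝ) * x j) := rfl
            rw [hd]
            exact mul_le_mul_of_nonneg_left (le_of_lt (hcase j)) (abs_nonneg _)
        _ = (∑ j, |Y i j|) * t := by rw [← Finset.sum_mul]
        _ ≤ K * t := by
            apply mul_le_mul_of_nonneg_right _ (by positivity)
            rw [hKdef]
            exact Finset.single_le_sum (f := fun i => ∑ j, |Y i j|)
              (fun k _ => Finset.sum_nonneg fun j _ => abs_nonneg _) (Finset.mem_univ i)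
    have hlip : D ≤ distZ a + |a - b| := by
      have := distZ_lipschitz b a
      rw [abs_sub_comm] at this
      exact this
    have hfin : t ≤ distZ a := by
      have hKt : K * t + t ≤ δ := by
        have : (K + 1) * t = δ / 2 := by rw [htdef]; field_simp
        nlinarith
      linarith
    rw [hwdef] at hct
    rw [hct]
    exact hfin
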